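/- arXiv:1912.09786 — 2 statements merged into one kernel-verified Lean document; each statement's English description precedes it below -/
import Mathlib

section
/- Let A be a commutative ring and a₁, …, a_k ∈ A a regular sequence. Then the module of syzygies of (a₁, …, a_k), i.e. the kernel of the map A^k → A sending (c₁,…,c_k) to Σ cᵢaᵢ, is generated by the Koszul relations aᵢ e_j − a_j eᵢ for 1 ≤ i < j ≤ k, where e₁,…,e_k is the standard basis of A^k. -/
/-!
Induct on the largest index `m` at which the syzygy `c` is nonzero. The relation
`∑ cᵢ aᵢ = 0` puts `c_m a_m` into `(a_j)_{j < m}`, so regularity puts `c_m` there too,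
say `c_m = ∑_{j < m} r_j a_j`. Then `∑_{j < m} r_j (a_j e_m - a_m e_j)` is a combination of
Koszul relations whose `m`-th coordinate is `c_m` and which vanishes beyond `m`;
subtracting it from `c` leaves a syzygy supported strictly below `m`.
-/

open Finset

section Syzygies

variable {A ι : Type*} [CommRing A]

section DecidableEq

variable [DecidableEq ι]

def koszulRelation (a : ι → A) (i j : ι) : ι → A :=
  a i • (Pi.single j 1 : ι → A) - a j • (Pi.single i 1 : ι → A)

def koszulRelations [LT ι] (a : ι → A) : Set (ι → A) :=
  {v | ∃ i j : ι, i < j ∧ v = koszulRelation a i j}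

lemma koszulRelation_apply_right {a : ι → A} {i j : ι} (h : i ≠ j) :
    koszulRelation a i j j = a i := by
  simp [koszulRelation, h]

lemma koszulRelation_apply_of_ne {a : ι → A} {i j t : ι} (hi : t ≠ i) (hj : t ≠ j) :
    koszulRelation a i j t = 0 := by
  simp [koszulRelation, hi, hj]

lemma linearCombination_koszulRelation [Fintype ι] (a : ι → A) (i j : ι) :
    Fintype.linearCombination A a (koszulRelation a i j) = 0 := by
  simp [koszulRelation, Fintype.linearCombination_apply_single, mul_comm]

lemma span_koszulRelations_le_ker [Fintype ι] [LT ι] (a : ι → A) :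
    Submodule.span A (koszulRelations a) ≤ LinearMap.ker (Fintype.linearCombination A a) := by
  rw [Submodule.span_le]
  rintro v ⟨i, j, -, rfl⟩
  exact linearCombination_koszulRelation a i j

end DecidableEq

lemma mem_ker_linearCombination_iff [Fintype ι] {a c : ι → A} :
    c ∈ LinearMap.ker (Fintype.linearCombination A a) ↔ ∑ i, c i * a i = 0 := by
  simp [Fintype.linearCombination_apply]

variable [LinearOrder ι]

lemma exists_mem_span_koszulRelations_apply_eq {a : ι → A} {m : ι} {x : A}
    (hx : x ∈ Ideal.span (a '' {j | j < m})) :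
    ∃ s ∈ Submodule.span A (koszulRelations a), s m = x ∧ ∀ i, m < i → s i = 0 := by
  induction hx using Submodule.span_induction with
  | mem x hx =>
    obtain ⟨j, hjm : j < m, rfl⟩ := hx
    refine ⟨koszulRelation a j m, Submodule.subset_span ⟨j, m, hjm, rfl⟩,
      koszulRelation_apply_right hjm.ne, fun i hi => ?_⟩
    exact koszulRelation_apply_of_ne (hjm.trans hi).ne' hi.ne'
  | zero => exact ⟨0, zero_mem _, rfl, fun _ _ => rfl⟩
  | add x y _ _ hx hy =>
    obtain ⟨s, hs, hsm, hsi⟩ := hx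
    obtain ⟨t, ht, htm, hti⟩ := hy
    exact ⟨s + t, add_mem hs ht, by simp [hsm, htm], fun i hi => by simp [hsi i hi, hti i hi]⟩
  | smul r x _ hx =>
    obtain ⟨s, hs, hsm, hsi⟩ := hx
    exact ⟨r • s, Submodule.smul_mem _ r hs, by simp [hsm], fun i hi => by simp [hsi i hi]⟩

lemma mul_mem_span_image_Iio_of_sum_eq_zero [Fintype ι] [LocallyFiniteOrderBot ι]
    {a c : ι → A} {m : ι} (hc : ∀ i, m < i → c i = 0) (hs : ∑ i, c i * a i = 0) :
    c m * a m ∈ Ideal.span (a '' {j | j < m}) := by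
  have hsplit : c m * a m + ∑ i ∈ Iio m, c i * a i = 0 := by
    rw [← hs, add_sum_Iio_eq_sum_Iic (f := fun i => c i * a i)]
    refine sum_subset (subset_univ _) fun i _ hi => ?_
    rw [hc i (by simpa using hi), zero_mul]
  rw [eq_neg_of_add_eq_zero_left hsplit]
  refine neg_mem (sum_mem fun i hi => Ideal.mul_mem_left _ _ (Ideal.subset_span ?_))
  exact ⟨i, by simpa using hi, rfl⟩

lemma mem_span_koszulRelations_of_mem_ker {k : ℕ} {a c : Fin k → A}
    (hreg : ∀ i : Fin k, ∀ x : A,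
      x * a i ∈ Ideal.span (a '' {j : Fin k | j < i}) →
      x ∈ Ideal.span (a '' {j : Fin k | j < i}))
    (hc : c ∈ LinearMap.ker (Fintype.linearCombination A a)) :
    c ∈ Submodule.span A (koszulRelations a) := by
  suffices ∀ n : ℕ, ∀ c ∈ LinearMap.ker (Fintype.linearCombination A a),
      (∀ i : Fin k, n ≤ i.val → c i = 0) → c ∈ Submodule.span A (koszulRelations a) from
    this k c hc fun i hi => absurd i.isLt hi.not_gt
  intro n
  induction n with
  | zero =>
    intro c _ hc0
    rw [funext fun i => hc0 i i.val.zero_le]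
    exact zero_mem _
  | succ n ih =>
    intro c hc hcn
    by_cases hnk : n < k
    swap
    · exact ih c hc fun i hi => absurd (i.isLt.trans_le (not_lt.mp hnk)) hi.not_gt
    set m : Fin k := ⟨n, hnk⟩
    have hcm : ∀ i, m < i → c i = 0 := fun i hi => hcn i hi
    have hcm_mem := mul_mem_span_image_Iio_of_sum_eq_zero hcm (mem_ker_linearCombination_iff.mp hc)
    obtain ⟨s, hs, hsm, hsi⟩ := exists_mem_span_koszulRelations_apply_eq (hreg m (c m) hcm_mem)
    have hcs : c - s ∈ Submodule.span A (koszulRelations a) := by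
      refine ih (c - s) (sub_mem hc (span_koszulRelations_le_ker a hs)) fun i hi => ?_
      rcases (show m ≤ i from hi).eq_or_lt with rfl | hmi
      · simp [hsm]
      · simp [hcm i hmi, hsi i hmi]
    simpa using add_mem hcs hs
end Syzygies

theorem stmt5_general {A : Type*} [CommRing A] {k : ℕ} (a : Fin k → A)
    (hreg : ∀ i : Fin k, ∀ x : A,
      x * a i ∈ Ideal.span (a '' {j : Fin k | j < i}) →
      x ∈ Ideal.span (a '' {j : Fin k | j < i})) :
    {c : Fin k → A | ∑ i, c i * a i = 0} =
      ↑(Submodule.span A {v : Fin k → A | ∃ i j : Fin k, i < j ∧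
          v = a i • (Pi.single j 1 : Fin k → A) - a j • (Pi.single i 1 : Fin k → A)}) := by
  ext c
  change _ ↔ c ∈ Submodule.span A (koszulRelations a)
  rw [Set.mem_ofPred_eq, ← mem_ker_linearCombination_iff]
  exact ⟨mem_span_koszulRelations_of_mem_ker hreg, fun hc => span_koszulRelations_le_ker a hc⟩

/-- If `a₁,…,a_k` is a regular sequence in a commutative ring `A` (each `aᵢ` is a
nonzerodivisor modulo the preceding ones and the ideal generated is proper), then the
syzygy module `{c : Σ cᵢaᵢ = 0}` is generated by the Koszul relations
`aᵢ e_j − a_j eᵢ` for `i < j`. -/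
theorem stmt5 {A : Type*} [CommRing A] {k : ℕ} (a : Fin k → A)
    (hproper : Ideal.span (Set.range a) ≠ ⊤)
    (hreg : ∀ i : Fin k, ∀ x : A,
      x * a i ∈ Ideal.span (a '' {j : Fin k | j < i}) →
      x ∈ Ideal.span (a '' {j : Fin k | j < i})) :
    {c : Fin k → A | ∑ i, c i * a i = 0} =
      ↑(Submodule.span A {v : Fin k → A | ∃ i j : Fin k, i < j ∧
          v = a i • (Pi.single j 1 : Fin k → A) - a j • (Pi.single i 1 : Fin k → A)}) :=
  stmt5_general a hreg
end

section
/- Let h be an element of the formal (or convergent) power series ring ℂ[[x₁,…,x_n]] with h(0) = 0. Then every p ∈ ℂ[[x₁,…,x_n,t]] can be written uniquely as p = q·(t − h) + r with q ∈ ℂ[[x₁,…,x_n,t]] and r ∈ ℂ[[x₁,…,x_n]]; moreover r(x) = p(x, h(x)), i.e. r is obtained from p by substituting h for t. -/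
/-!
With `S = X * q + C r`, the identity `p = q * (X - C h) + C r` says exactly that
`pₘ = Sₘ - Sₘ₊₁ * h` for all `m`. Telescoping gives `Sₘ = ∑_{k<N} pₘ₊ₖ hᵏ + Sₘ₊ₙ hᴺ`, and the
last term has order at least `N` because `h(0) = 0`. So each `Sₘ` is forced to be the
coefficientwise limit of the partial sums of `∑ₖ pₘ₊ₖ hᵏ`; this gives uniqueness and
`r = S₀ = p(h)`, and conversely these limits satisfy the recursion, which gives existence.
-/

open Finset

namespace MvPowerSeries

variable {σ R : Type*} [CommRing R] {h : MvPowerSeries σ R}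

theorem coeff_mul_pow_eq_zero_of_degree_lt_order_add (hh : constantCoeff h = 0)
    {a : MvPowerSeries σ R} {k : ℕ} {d : σ →₀ ℕ} (hd : (d.degree : ℕ∞) < a.order + k) :
    coeff d (a * h ^ k) = 0 :=
  coeff_of_lt_order <| hd.trans_le <|
    (add_le_add le_rfl (le_order_pow_of_constantCoeff_eq_zero k hh)).trans le_order_mul

theorem coeff_mul_pow_eq_zero_of_degree_lt (hh : constantCoeff h = 0)
    (a : MvPowerSeries σ R) {k : ℕ} {d : σ →₀ ℕ} (hd : d.degree < k) :
    coeff d (a * h ^ k) = 0 :=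
  coeff_mul_pow_eq_zero_of_degree_lt_order_add hh <| (Nat.cast_lt.2 hd).trans_le le_add_self

end MvPowerSeries

namespace PowerSeries

section DivisionIdentity

variable {A : Type*} [CommRing A]

theorem coeff_mul_X_sub_C_add_C (q : PowerSeries A) (a r : A) (m : ℕ) :
    coeff m (q * (X - C a) + C r) =
      coeff m (X * q + C r) - coeff (m + 1) (X * q + C r) * a := by
  rw [show q * (X - C a) + C r = X * q + C r - q * C a by ring, map_sub, coeff_mul_C]
  simp [coeff_succ_X_mul]

end DivisionIdentity

noncomputable section

variable {σ R : Type*} [CommRing R] (p : PowerSeries (MvPowerSeries σ R))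
  (h : MvPowerSeries σ R)

def truncTailEval (m N : ℕ) : MvPowerSeries σ R :=
  ∑ k ∈ range N, coeff (k + m) p * h ^ k

/-- The value at `h` of the tail `∑ₖ pₘ₊ₖ tᵏ`: its coefficient of degree `d` is read off from
any partial sum with more than `|d|` terms. -/
def tailEval (m : ℕ) : MvPowerSeries σ R :=
  fun d => MvPowerSeries.coeff d (truncTailEval p h m (d.degree + 1))

theorem truncTailEval_succ (m N : ℕ) :
    truncTailEval p h m (N + 1) = coeff m p + truncTailEval p h (m + 1) N * h := by
  rw [truncTailEval, truncTailEval, sum_range_succ', sum_mul, add_comm]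
  congr 1
  · simp
  · refine sum_congr rfl fun k _ => ?_
    rw [show k + 1 + m = k + (m + 1) by omega, pow_succ, mul_assoc]

variable {p h}

theorem coeff_truncTailEval_of_le (hh : MvPowerSeries.constantCoeff h = 0) (m : ℕ)
    {M N : ℕ} (hMN : M ≤ N) {d : σ →₀ ℕ} (hd : d.degree < M) :
    MvPowerSeries.coeff d (truncTailEval p h m N) =
      MvPowerSeries.coeff d (truncTailEval p h m M) := by
  simp only [truncTailEval, map_sum]
  refine (sum_subset (range_subset_range.2 hMN) fun k _ hkM => ?_).symm
  exact MvPowerSeries.coeff_mul_pow_eq_zero_of_degree_lt hh _ (by rw [mem_range] at hkM; omega)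

theorem coeff_tailEval (hh : MvPowerSeries.constantCoeff h = 0) (m : ℕ) {N : ℕ}
    {d : σ →₀ ℕ} (hd : d.degree < N) :
    MvPowerSeries.coeff d (tailEval p h m) = MvPowerSeries.coeff d (truncTailEval p h m N) := by
  rcases le_total N (d.degree + 1) with hN | hN
  · exact coeff_truncTailEval_of_le hh m hN hd
  · exact (coeff_truncTailEval_of_le hh m hN (lt_add_one _)).symm

theorem tailEval_eq_coeff_add_tailEval_mul (hh : MvPowerSeries.constantCoeff h = 0) (m : ℕ) :
    tailEval p h m = coeff m p + tailEval p h (m + 1) * h := by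
  ext d
  rw [coeff_tailEval hh m (lt_add_one d.degree), truncTailEval_succ, map_add, map_add,
    add_right_inj, ← sub_eq_zero, ← map_sub, ← sub_mul]
  have hagree :
      (d.degree : ℕ∞) ≤ (truncTailEval p h (m + 1) d.degree - tailEval p h (m + 1)).order :=
    MvPowerSeries.le_order fun e he => by
      rw [map_sub, coeff_tailEval hh (m + 1) (by exact_mod_cast he), sub_self]
  simpa using MvPowerSeries.coeff_mul_pow_eq_zero_of_degree_lt_order_add hh (k := 1) <| by
    simpa using (ENat.lt_add_one_iff' (ENat.natCast_ne_top _)).2 hagree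

theorem eq_tailEval_of_coeff_eq_sub_mul (hh : MvPowerSeries.constantCoeff h = 0)
    {Q : ℕ → MvPowerSeries σ R} (hQ : ∀ m, coeff m p = Q m - Q (m + 1) * h) (m : ℕ) :
    Q m = tailEval p h m := by
  have telescope : ∀ N m, Q m = truncTailEval p h m N + Q (m + N) * h ^ N := by
    intro N
    induction N with
    | zero => simp [truncTailEval]
    | succ N ih =>
      intro m
      rw [truncTailEval_succ, show m + (N + 1) = m + 1 + N by omega]
      linear_combination -hQ m + h * ih (m + 1)
  ext d
  rw [telescope (d.degree + 1) m, map_add,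
    MvPowerSeries.coeff_mul_pow_eq_zero_of_degree_lt hh _ (lt_add_one _), add_zero,
    coeff_tailEval hh m (lt_add_one _)]

theorem eq_mul_X_sub_C_add_C_iff (hh : MvPowerSeries.constantCoeff h = 0)
    {q : PowerSeries (MvPowerSeries σ R)} {r : MvPowerSeries σ R} :
    p = q * (X - C h) + C r ↔ q = mk (fun m => tailEval p h (m + 1)) ∧ r = tailEval p h 0 := by
  constructor
  · intro hp
    have hS := eq_tailEval_of_coeff_eq_sub_mul (p := p) hh (Q := fun m => coeff m (X * q + C r))
      (fun m => by rw [hp]; exact coeff_mul_X_sub_C_add_C q h r m)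
    refine ⟨ext fun m => ?_, ?_⟩
    · simpa [coeff_succ_X_mul] using hS (m + 1)
    · simpa using hS 0
  · rintro ⟨rfl, rfl⟩
    have hS : ∀ m, coeff m (X * mk (fun m => tailEval p h (m + 1)) + C (tailEval p h 0)) =
        tailEval p h m := by
      rintro (_ | m) <;> simp [coeff_succ_X_mul]
    ext m
    rw [coeff_mul_X_sub_C_add_C, hS, hS, tailEval_eq_coeff_add_tailEval_mul hh m]
    exact (add_sub_cancel_right _ _).symm

end

end PowerSeries

/-- Weierstrass division by `t − h`:  let `h ∈ ℂ[[x₁,…,x_n]]` with `h(0) = 0`.  Every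
`p ∈ ℂ[[x₁,…,x_n]][[t]]` can be written uniquely as `p = q·(t − h) + r` with
`r ∈ ℂ[[x₁,…,x_n]]`; moreover `r = p(x, h(x))`, i.e. `r` is obtained by substituting
`h` for `t` (expressed here by the fact that, for every `N`, `r` agrees with the
partial substitution `Σ_{k<N} p_k h^k` in all coefficients of total degree `< N`). -/
theorem stmt10 (n : ℕ) (h : MvPowerSeries (Fin n) ℂ)
    (hh : MvPowerSeries.constantCoeff (σ := Fin n) (R := ℂ) h = 0)
    (p : PowerSeries (MvPowerSeries (Fin n) ℂ)) :
    (∃! qr : PowerSeries (MvPowerSeries (Fin n) ℂ) × MvPowerSeries (Fin n) ℂ,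
      p = qr.1 * (PowerSeries.X - PowerSeries.C h) + PowerSeries.C qr.2) ∧
    (∀ (q : PowerSeries (MvPowerSeries (Fin n) ℂ)) (r : MvPowerSeries (Fin n) ℂ),
      p = q * (PowerSeries.X - PowerSeries.C h) + PowerSeries.C r →
      ∀ (N : ℕ) (d : Fin n →₀ ℕ), (d.sum fun _ e => e) < N →
        MvPowerSeries.coeff (R := ℂ) d
          (r - ∑ k ∈ Finset.range N, PowerSeries.coeff k p * h ^ k) = 0) := by
  refine ⟨⟨(PowerSeries.mk fun m => p.tailEval h (m + 1), p.tailEval h 0),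
    (PowerSeries.eq_mul_X_sub_C_add_C_iff hh).2 ⟨rfl, rfl⟩, ?_⟩, ?_⟩
  · rintro ⟨q, r⟩ hqr
    obtain ⟨rfl, rfl⟩ := (PowerSeries.eq_mul_X_sub_C_add_C_iff hh).1 hqr
    rfl
  · intro q r hqr N d hd
    obtain ⟨-, rfl⟩ := (PowerSeries.eq_mul_X_sub_C_add_C_iff hh).1 hqr
    rw [map_sub, PowerSeries.coeff_tailEval hh 0 hd]
    exact sub_self _
end
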